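/- arXiv:1204.3915 — 4 statements merged into one kernel-verified Lean document; each statement's English description precedes it below -/
import Mathlib

section
/- Let U be a Uniform(0,1) random variable and define Y' = F_{x'}^{−1}(U) and Y'' = F_{x''}^{−1}(U), where F_x is the cumulative distribution function of the one-parameter exponential family density p(y|η) with x = B(η), and F_x^{−1}(u) = inf{t ≥ 0 : F_x(t) ≥ u}. If x' = B(η') and x'' = B(η''), then E|Y' − Y''| = |x' − x''|. -/
open MeasureTheory

/-- The one-parameter exponential family distribution with natural parameter `η`:
the measure with density `y ↦ exp (η y − A η) * h y` with respect to the base measure `μ`. -/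
noncomputable def expFam (μ : Measure ℝ) (A h : ℝ → ℝ) (η : ℝ) : Measure ℝ :=
  μ.withDensity fun y => ENNReal.ofReal (Real.exp (η * y - A η) * h y)

/-- The generalized inverse CDF `F_x⁻¹(u) = inf {t ≥ 0 : F_x t ≥ u}`, where `F_x` is the
CDF of the exponential family member with mean `x = B(η)` (i.e. natural parameter
`η = B⁻¹(x)`). -/
noncomputable def qtl (μ : Measure ℝ) (A h B : ℝ → ℝ) (x u : ℝ) : ℝ :=
  sInf {t : ℝ | 0 ≤ t ∧ ENNReal.ofReal u ≤ expFam μ A h (Function.invFun B x) (Set.Iic t)}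

/-!
For `η₁ < η₂` the likelihood ratio `exp ((η₂ - η₁) y - (A η₂ - A η₁))` is increasing in `y`, so
the family is stochastically increasing in `η`: `F_{B η₂} ≤ F_{B η₁}`. Hence the quantile
functions are ordered, `F_{B η₁}⁻¹ ≤ F_{B η₂}⁻¹` on `(0, 1)`, and feeding both the same uniform `U`
gives `|Y' - Y''| = Y' - Y''` when `η'' ≤ η'`. Since `F_x⁻¹(U)` has law `F_x`, taking expectations
yields `B η' - B η''`.
-/

open Set Filter Topology ProbabilityTheory

section Quantile

variable {ν ν₁ ν₂ : Measure ℝ} {u t : ℝ}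

noncomputable def posQuantile (ν : Measure ℝ) (u : ℝ) : ℝ :=
  sInf {t : ℝ | 0 ≤ t ∧ ENNReal.ofReal u ≤ ν (Iic t)}

lemma posQuantile_nonneg (ν : Measure ℝ) (u : ℝ) : 0 ≤ posQuantile ν u :=
  Real.sInf_nonneg fun _ ht => ht.1

variable [IsProbabilityMeasure ν]

lemma posQuantile_le_iff (hu : u < 1) : posQuantile ν u ≤ t ↔ 0 ≤ t ∧ u ≤ cdf ν t := by
  have hcdf : ∀ s, ENNReal.ofReal u ≤ ν (Iic s) ↔ u ≤ cdf ν s := fun s => by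
    rw [← ofReal_cdf, ENNReal.ofReal_le_ofReal_iff (cdf_nonneg ν s)]
  set S := {t : ℝ | 0 ≤ t ∧ ENNReal.ofReal u ≤ ν (Iic t)}
  have hbdd : BddBelow S := ⟨0, fun _ hs => hs.1⟩
  have hne : S.Nonempty := by
    have hlim := tendsto_measure_Iic_atTop ν
    rw [measure_univ] at hlim
    have : ∀ᶠ s in atTop, ENNReal.ofReal u < ν (Iic s) :=
      hlim.eventually_const_lt (ENNReal.ofReal_lt_one.2 hu)
    obtain ⟨s, hs, hs0⟩ := (this.and (eventually_ge_atTop 0)).exists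
    exact ⟨s, hs0, hs.le⟩
  -- right-continuity of the cdf puts the infimum itself in `S`
  have hmem : u ≤ cdf ν (posQuantile ν u) := by
    refine ge_of_tendsto (((cdf ν).right_continuous _).mono Ioi_subset_Ici_self) ?_
    filter_upwards [self_mem_nhdsWithin] with s hs
    obtain ⟨r, hrS, hrs⟩ := exists_lt_of_csInf_lt hne hs
    exact ((hcdf r).1 hrS.2).trans ((cdf ν).mono hrs.le)
  refine ⟨fun hle => ⟨(posQuantile_nonneg ν u).trans hle, hmem.trans ((cdf ν).mono hle)⟩,
    fun ht => csInf_le hbdd ⟨ht.1, (hcdf t).2 ht.2⟩⟩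

lemma posQuantile_monotoneOn : MonotoneOn (posQuantile ν) (Iio 1) := fun _ hu _ hu' huu' =>
  (posQuantile_le_iff hu).2
    ⟨posQuantile_nonneg ν _, huu'.trans ((posQuantile_le_iff hu').1 le_rfl).2⟩

lemma posQuantile_le_posQuantile [IsProbabilityMeasure ν₁] [IsProbabilityMeasure ν₂]
    (hdom : ∀ t, ν₂ (Iic t) ≤ ν₁ (Iic t)) (hu : u < 1) :
    posQuantile ν₁ u ≤ posQuantile ν₂ u := by
  obtain ⟨h0, hcdf⟩ := (posQuantile_le_iff (ν := ν₂) hu).1 le_rfl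
  refine (posQuantile_le_iff hu).2 ⟨h0, hcdf.trans ?_⟩
  rw [← ENNReal.ofReal_le_ofReal_iff (cdf_nonneg _ _), ofReal_cdf, ofReal_cdf]
  exact hdom _

lemma posQuantile_le_iff_le_cdf (h0 : ν (Iio 0) = 0) (hu : u ∈ Ioo 0 1) :
    posQuantile ν u ≤ t ↔ u ≤ cdf ν t := by
  rw [posQuantile_le_iff hu.2, and_iff_right_iff_imp]
  intro hut
  by_contra! ht
  have : ν (Iic t) = 0 := measure_mono_null (Iic_subset_Iio.2 ht) h0
  rw [cdf_eq_real, measureReal_def, this, ENNReal.toReal_zero] at hut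
  exact hut.not_gt hu.1

lemma aemeasurable_posQuantile : AEMeasurable (posQuantile ν) (volume.restrict (Ioo 0 1)) :=
  aemeasurable_restrict_of_monotoneOn measurableSet_Ioo
    (posQuantile_monotoneOn.mono Ioo_subset_Iio_self)

lemma map_posQuantile_uniform (h0 : ν (Iio 0) = 0) :
    (volume.restrict (Ioo 0 1)).map (posQuantile ν) = ν := by
  refine Measure.ext_of_Iic _ _ fun t => ?_
  rw [Measure.map_apply_of_aemeasurable aemeasurable_posQuantile measurableSet_Iic,
    Measure.restrict_apply' measurableSet_Ioo]
  have hpre : posQuantile ν ⁻¹' Iic t ∩ Ioo 0 1 = Ioo 0 1 ∩ Iic (cdf ν t) := by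
    ext u
    simp only [mem_inter_iff, mem_preimage, mem_Iic]
    exact ⟨fun hu => ⟨hu.2, (posQuantile_le_iff_le_cdf h0 hu.2).1 hu.1⟩,
      fun hu => ⟨(posQuantile_le_iff_le_cdf h0 hu.1).2 hu.2, hu.1⟩⟩
  have hae : (Ioo 0 1 ∩ Iic (cdf ν t) : Set ℝ) =ᵐ[volume] (Ioc 0 1 ∩ Iic (cdf ν t) : Set ℝ) :=
    ae_eq_set_inter Ioo_ae_eq_Ioc (ae_eq_refl _)
  rw [hpre, measure_congr hae, Ioc_inter_Iic,
    inf_eq_right.2 (cdf_le_one ν t), Real.volume_Ioc, sub_zero, ofReal_cdf]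

end Quantile

section Coupling

variable {Ω : Type*} [MeasurableSpace Ω] {P : Measure Ω} {U : Ω → ℝ} {ν ν₁ ν₂ : Measure ℝ}

lemma map_posQuantile_comp [IsProbabilityMeasure ν] (h0 : ν (Iio 0) = 0) (hU : Measurable U)
    (hUlaw : P.map U = volume.restrict (Ioo 0 1)) :
    P.map (fun ω => posQuantile ν (U ω)) = ν := by
  change P.map (posQuantile ν ∘ U) = ν
  rw [← AEMeasurable.map_map_of_aemeasurable (hUlaw ▸ aemeasurable_posQuantile) hU.aemeasurable,
    hUlaw, map_posQuantile_uniform h0]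

lemma integral_abs_posQuantile_sub [IsProbabilityMeasure ν₁] [IsProbabilityMeasure ν₂]
    (h0₁ : ν₁ (Iio 0) = 0) (h0₂ : ν₂ (Iio 0) = 0) (hdom : ∀ t, ν₂ (Iic t) ≤ ν₁ (Iic t))
    (hint : Integrable (fun y => y) ν₂) (hU : Measurable U)
    (hUlaw : P.map U = volume.restrict (Ioo 0 1)) :
    ∫ ω, |posQuantile ν₂ (U ω) - posQuantile ν₁ (U ω)| ∂P = ∫ y, y ∂ν₂ - ∫ y, y ∂ν₁ := by
  have hY : ∀ ν : Measure ℝ, [IsProbabilityMeasure ν] →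
      AEMeasurable (fun ω => posQuantile ν (U ω)) P := fun _ _ =>
    (hUlaw ▸ aemeasurable_posQuantile).comp_aemeasurable hU.aemeasurable
  have hmean : ∀ ν : Measure ℝ, [IsProbabilityMeasure ν] → ν (Iio 0) = 0 →
      ∫ ω, posQuantile ν (U ω) ∂P = ∫ y, y ∂ν := fun ν _ h0 =>
    (integral_map (hY ν) aestronglyMeasurable_id).symm.trans
      (by rw [map_posQuantile_comp h0 hU hUlaw]; rfl)
  have hle : ∀ᵐ ω ∂P, posQuantile ν₁ (U ω) ≤ posQuantile ν₂ (U ω) := by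
    have : ∀ᵐ u ∂P.map U, u ∈ Ioo (0 : ℝ) 1 := hUlaw ▸ ae_restrict_mem measurableSet_Ioo
    filter_upwards [ae_of_ae_map hU.aemeasurable this] with ω hω
    exact posQuantile_le_posQuantile hdom hω.2
  have hint₂ : Integrable (fun ω => posQuantile ν₂ (U ω)) P := by
    rw [← map_posQuantile_comp h0₂ hU hUlaw] at hint
    exact (integrable_map_measure aestronglyMeasurable_id (hY ν₂)).1 hint
  have hint₁ : Integrable (fun ω => posQuantile ν₁ (U ω)) P :=
    hint₂.mono' (hY ν₁).aestronglyMeasurable <| hle.mono fun ω hω => by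
      rwa [Real.norm_of_nonneg (posQuantile_nonneg _ _)]
  calc ∫ ω, |posQuantile ν₂ (U ω) - posQuantile ν₁ (U ω)| ∂P
      = ∫ ω, posQuantile ν₂ (U ω) - posQuantile ν₁ (U ω) ∂P :=
        integral_congr_ae <| hle.mono fun ω hω => abs_of_nonneg (sub_nonneg.2 hω)
    _ = ∫ y, y ∂ν₂ - ∫ y, y ∂ν₁ := by
        rw [integral_sub hint₂ hint₁, hmean ν₂ h0₂, hmean ν₁ h0₁]

end Coupling

lemma measure_Iic_le_of_restrict_le {ν₁ ν₂ : Measure ℝ} [IsProbabilityMeasure ν₁]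
    [IsProbabilityMeasure ν₂] {c : ℝ} (hle : ν₂.restrict (Iic c) ≤ ν₁.restrict (Iic c))
    (hge : ν₁.restrict (Ioi c) ≤ ν₂.restrict (Ioi c)) (t : ℝ) : ν₂ (Iic t) ≤ ν₁ (Iic t) := by
  rcases le_or_gt t c with htc | hct
  · have hsub : Iic t ⊆ Iic c := Iic_subset_Iic.2 htc
    rw [← Measure.restrict_eq_self ν₂ hsub, ← Measure.restrict_eq_self ν₁ hsub]
    exact Measure.le_iff'.1 hle _
  · have hsub : Ioi t ⊆ Ioi c := Ioi_subset_Ioi hct.le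
    have hIoi : ν₁ (Ioi t) ≤ ν₂ (Ioi t) := by
      rw [← Measure.restrict_eq_self ν₂ hsub, ← Measure.restrict_eq_self ν₁ hsub]
      exact Measure.le_iff'.1 hge _
    rw [← compl_Ioi, prob_compl_eq_one_sub measurableSet_Ioi,
      prob_compl_eq_one_sub measurableSet_Ioi]
    exact tsub_le_tsub_left hIoi 1

section ExpFam

variable {μ : Measure ℝ} {A h B : ℝ → ℝ}

lemma expFam_Iio_zero (hsupp : μ (Iio 0) = 0) (η : ℝ) : expFam μ A h η (Iio 0) = 0 :=
  withDensity_absolutelyContinuous _ _ hsupp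

lemma qtl_apply (hB : StrictMono B) (η u : ℝ) :
    qtl μ A h B (B η) u = posQuantile (expFam μ A h η) u := by
  rw [qtl, Function.leftInverse_invFun hB.injective η, posQuantile]

-- `(A η₂ - A η₁) / (η₂ - η₁)` is where the likelihood ratio of `η₂` to `η₁` crosses `1`.
lemma expFam_restrict_Iic_le (hh : ∀ y, 0 ≤ h y) {η₁ η₂ : ℝ} (hlt : η₁ < η₂) :
    (expFam μ A h η₂).restrict (Iic ((A η₂ - A η₁) / (η₂ - η₁)))
      ≤ (expFam μ A h η₁).restrict (Iic ((A η₂ - A η₁) / (η₂ - η₁))) := by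
  rw [expFam, expFam, restrict_withDensity measurableSet_Iic,
    restrict_withDensity measurableSet_Iic]
  refine withDensity_mono <| (ae_restrict_iff' measurableSet_Iic).2 <| .of_forall fun y hy => ?_
  have := (le_div_iff₀ (sub_pos.2 hlt)).1 hy
  exact ENNReal.ofReal_le_ofReal
    (mul_le_mul_of_nonneg_right (Real.exp_le_exp.2 (by linarith)) (hh y))

lemma expFam_restrict_Ioi_le (hh : ∀ y, 0 ≤ h y) {η₁ η₂ : ℝ} (hlt : η₁ < η₂) :
    (expFam μ A h η₁).restrict (Ioi ((A η₂ - A η₁) / (η₂ - η₁)))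
      ≤ (expFam μ A h η₂).restrict (Ioi ((A η₂ - A η₁) / (η₂ - η₁))) := by
  rw [expFam, expFam, restrict_withDensity measurableSet_Ioi,
    restrict_withDensity measurableSet_Ioi]
  refine withDensity_mono <| (ae_restrict_iff' measurableSet_Ioi).2 <| .of_forall fun y hy => ?_
  have := (div_lt_iff₀ (sub_pos.2 hlt)).1 hy
  exact ENNReal.ofReal_le_ofReal
    (mul_le_mul_of_nonneg_right (Real.exp_le_exp.2 (by linarith)) (hh y))

lemma expFam_Iic_le_of_le (hh : ∀ y, 0 ≤ h y) {η₁ η₂ : ℝ} (hle : η₁ ≤ η₂)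
    [IsProbabilityMeasure (expFam μ A h η₁)] [IsProbabilityMeasure (expFam μ A h η₂)] (t : ℝ) :
    expFam μ A h η₂ (Iic t) ≤ expFam μ A h η₁ (Iic t) := by
  rcases hle.eq_or_lt with rfl | hlt
  · exact le_rfl
  exact measure_Iic_le_of_restrict_le (expFam_restrict_Iic_le hh hlt)
    (expFam_restrict_Ioi_le hh hlt) t

end ExpFam

theorem stmt1_general {Ω : Type*} [MeasurableSpace Ω] (P : Measure Ω)
    (μ : Measure ℝ) (A h B : ℝ → ℝ)
    (hsupp : μ (Set.Iio 0) = 0) (hh : ∀ y, 0 ≤ h y)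
    (hB : StrictMono B)
    (η' η'' : ℝ)
    (hp' : IsProbabilityMeasure (expFam μ A h η'))
    (hp'' : IsProbabilityMeasure (expFam μ A h η''))
    (hm' : ∫ y, y ∂expFam μ A h η' = B η')
    (hm'' : ∫ y, y ∂expFam μ A h η'' = B η'')
    (U : Ω → ℝ) (hU : Measurable U)
    (hUlaw : Measure.map U P = volume.restrict (Set.Ioo (0 : ℝ) 1)) :
    ∫ ω, |qtl μ A h B (B η') (U ω) - qtl μ A h B (B η'') (U ω)| ∂P = |B η' - B η''| := by
  wlog hle : η'' ≤ η' generalizing η' η''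
  · simp only [abs_sub_comm (B η'), abs_sub_comm (qtl μ A h B (B η') _)]
    exact this η'' η' hp'' hp' hm'' hm' (le_of_not_ge hle)
  rcases hle.eq_or_lt with rfl | hlt
  · simp
  have hint : Integrable (fun y => y) (expFam μ A h η') := by
    by_contra hni
    have hnonneg : 0 ≤ B η'' := hm'' ▸ integral_nonneg_of_ae
      ((measure_eq_zero_iff_ae_notMem.1 (expFam_Iio_zero hsupp η'')).mono fun _ hy => not_lt.1 hy)
    linarith [hB hlt, integral_undef hni ▸ hm']
  simp only [qtl_apply hB]
  rw [integral_abs_posQuantile_sub (expFam_Iio_zero hsupp η'') (expFam_Iio_zero hsupp η')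
    (expFam_Iic_le_of_le hh hle) hint hU hUlaw, hm', hm'', abs_of_pos (sub_pos.2 (hB hlt))]

/-- if `U ~ Uniform(0,1)` and `Y' = F_{x'}⁻¹(U)`, `Y'' = F_{x''}⁻¹(U)` where
`x' = B η'`, `x'' = B η''` are the means of the corresponding exponential family members,
then `E |Y' − Y''| = |x' − x''|`. -/
theorem stmt1 {Ω : Type*} [MeasurableSpace Ω] (P : Measure Ω) [IsProbabilityMeasure P]
    (μ : Measure ℝ) [SigmaFinite μ] (A h B : ℝ → ℝ)
    (hsupp : μ (Set.Iio 0) = 0) (hh : ∀ y, 0 ≤ h y)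
    (hB : StrictMono B) (hAB : ∀ η, HasDerivAt A (B η) η)
    (η' η'' : ℝ)
    (hp' : IsProbabilityMeasure (expFam μ A h η'))
    (hp'' : IsProbabilityMeasure (expFam μ A h η''))
    (hm' : ∫ y, y ∂expFam μ A h η' = B η')
    (hm'' : ∫ y, y ∂expFam μ A h η'' = B η'')
    (U : Ω → ℝ) (hU : Measurable U)
    (hUlaw : Measure.map U P = volume.restrict (Set.Ioo (0 : ℝ) 1)) :
    ∫ ω, |qtl μ A h B (B η') (U ω) - qtl μ A h B (B η'') (U ω)| ∂P = |B η' - B η''| :=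
  stmt1_general P μ A h B hsupp hh hB η' η'' hp' hp'' hm' hm'' U hU hUlaw
end

section
/- Assume the observation-driven model where the support of Y_t is a subset of the non-negative integers ℕ₀, the function g satisfies the contraction condition with a + b < 1, and {(X_t,Y_t), t ∈ ℤ} is in its stationary regime. Define g_1 = g and g_k(x, y_1,…,y_k) = g_{k−1}(g(x, y_k), y_1,…,y_{k−1}) for k ≥ 2, so that X_t = g_k(X_{t−k}, Y_{t−1},…,Y_{t−k}). Then E|X_t − g_k(0, Y_{t−1},…,Y_{t−k})| ≤ a^k · E X_{t−k} for every k ≥ 1, and consequently there exists a measurable function g_∞ : ℕ₀^∞ → [0,∞) such that X_t = g_∞(Y_{t−1}, Y_{t−2}, …) almost surely. -/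
/-!
Unrolling the recursion `k` times gives `X_t = g_k(X_{t-k}, Y_{t-1}, …, Y_{t-k})`. Since `g` is an
`a`-contraction in its first argument on `[0, ∞)`, `g_k(·, y)` is an `a^k`-contraction, whence
`|X_t - g_k(0, Y_{t-1}, …, Y_{t-k})| ≤ a^k X_{t-k}` pointwise; integrating gives the first claim.
Stationarity makes `E X_{t-k} = E X_t`, so the `L¹` errors are geometrically summable and the
approximations converge almost surely. Their limit (taken as a `limsup`, so that it is defined
everywhere) is measurable, because each `g_k(0, ·)` depends on finitely many coordinates of a
sequence of natural numbers.
-/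

open MeasureTheory ProbabilityTheory Filter

/-- The iterated update maps: `gIter g k x ys = g_k (x, ys 1, …, ys k)` where `g_1 = g`
and `g_k (x, y_1, …, y_k) = g_{k−1} (g (x, y_k), y_1, …, y_{k−1})`. -/
def gIter (g : ℝ → ℝ → ℝ) : ℕ → ℝ → (ℕ → ℝ) → ℝ
  | 0, x, _ => x
  | k + 1, x, ys => gIter g k (g x (ys (k + 1))) ys

open scoped Topology ENNReal

section gIter

variable {g : ℝ → ℝ → ℝ}

lemma gIter_congr : ∀ (k : ℕ) (x : ℝ) {ys ys' : ℕ → ℝ},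
    (∀ j, 1 ≤ j → j ≤ k → ys j = ys' j) → gIter g k x ys = gIter g k x ys'
  | 0, _, _, _, _ => rfl
  | k + 1, x, ys, ys', h => by
    rw [gIter, gIter, h (k + 1) (by omega) le_rfl]
    exact gIter_congr k _ fun j h1 h2 => h j h1 (by omega)

lemma abs_gIter_sub_gIter_le {a : ℝ} (ha : 0 ≤ a)
    (hcontr : ∀ x x' y : ℝ, 0 ≤ x → 0 ≤ x' → 0 ≤ y → |g x y - g x' y| ≤ a * |x - x'|)
    (hgnn : ∀ x y, 0 ≤ x → 0 ≤ y → 0 ≤ g x y) :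
    ∀ (k : ℕ) {x x' : ℝ} {ys : ℕ → ℝ}, 0 ≤ x → 0 ≤ x' → (∀ j, 0 ≤ ys j) →
      |gIter g k x ys - gIter g k x' ys| ≤ a ^ k * |x - x'|
  | 0, x, x', ys, _, _, _ => by simp [gIter]
  | k + 1, x, x', ys, hx, hx', hys =>
    calc |gIter g k (g x (ys (k + 1))) ys - gIter g k (g x' (ys (k + 1))) ys|
        ≤ a ^ k * |g x (ys (k + 1)) - g x' (ys (k + 1))| :=
          abs_gIter_sub_gIter_le ha hcontr hgnn k (hgnn _ _ hx (hys _))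
            (hgnn _ _ hx' (hys _)) hys
      _ ≤ a ^ k * (a * |x - x'|) := by gcongr; exact hcontr _ _ _ hx hx' (hys _)
      _ = a ^ (k + 1) * |x - x'| := by ring

lemma eq_gIter_of_recursion {x y : ℤ → ℝ} (h : ∀ t, x t = g (x (t - 1)) (y (t - 1)))
    (k : ℕ) (t : ℤ) : x t = gIter g k (x (t - k)) fun j => y (t - j) := by
  induction k with
  | zero => simp [gIter]
  | succ k ih =>
    have hstep : g (x (t - (k + 1 : ℕ))) (y (t - (k + 1 : ℕ))) = x (t - k) := by
      rw [h (t - k)]; push_cast; ring_nf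
    rw [gIter, hstep, ← ih]

lemma abs_sub_gIter_zero_le {a : ℝ} (ha : 0 ≤ a)
    (hcontr : ∀ x x' y : ℝ, 0 ≤ x → 0 ≤ x' → 0 ≤ y → |g x y - g x' y| ≤ a * |x - x'|)
    (hgnn : ∀ x y, 0 ≤ x → 0 ≤ y → 0 ≤ g x y) {x y : ℤ → ℝ} (hx : ∀ t, 0 ≤ x t)
    (hy : ∀ t, 0 ≤ y t) (h : ∀ t, x t = g (x (t - 1)) (y (t - 1))) (k : ℕ) (t : ℤ) :
    |x t - gIter g k 0 fun j => y (t - j)| ≤ a ^ k * x (t - k) := by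
  have := abs_gIter_sub_gIter_le ha hcontr hgnn k (hx (t - k)) le_rfl fun j => hy (t - j)
  rwa [← eq_gIter_of_recursion h, sub_zero, abs_of_nonneg (hx _)] at this

end gIter

lemma measurable_gIter_natCast (g : ℝ → ℝ → ℝ) (k : ℕ) (x : ℝ) :
    Measurable fun v : ℕ → ℕ => gIter g k x fun j => (v j : ℝ) := by
  let F : (Fin (k + 1) → ℕ) → ℝ := fun w =>
    gIter g k x fun j => if h : j < k + 1 then (w ⟨j, h⟩ : ℝ) else 0
  have hF : (fun v : ℕ → ℕ => gIter g k x fun j => (v j : ℝ)) = F ∘ fun v i => v i :=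
    funext fun v => gIter_congr k x fun j _ hj => by simp [show j < k + 1 by omega]
  rw [hF]
  exact (measurable_of_countable F).comp (measurable_pi_lambda _ fun i => measurable_pi_apply _)

/-- `gIter` reads `ys 1, …, ys k`, whereas `w = (Y_{t-1}, Y_{t-2}, …)` starts at index `0`. -/
noncomputable def gLimit (g : ℝ → ℝ → ℝ) (w : ℕ → ℕ) : ℝ :=
  (limsup (fun k => ENNReal.ofReal (gIter g k 0 fun j => (w (j - 1) : ℝ))) atTop).toReal

lemma measurable_gLimit (g : ℝ → ℝ → ℝ) : Measurable (gLimit g) :=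
  (Measurable.limsup fun k => ((measurable_gIter_natCast g k 0).comp
    (measurable_pi_lambda _ fun j => measurable_pi_apply (j - 1))).ennreal_ofReal).ennreal_toReal

lemma gLimit_eq_of_tendsto {g : ℝ → ℝ → ℝ} {w : ℕ → ℕ} {x : ℝ} (hx : 0 ≤ x)
    (h : Tendsto (fun k => gIter g k 0 fun j => (w (j - 1) : ℝ)) atTop (𝓝 x)) :
    gLimit g w = x := by
  rw [gLimit, (ENNReal.tendsto_ofReal h).limsup_eq, ENNReal.toReal_ofReal hx]

lemma ae_tendsto_of_summable_integral_norm_sub {Ω E : Type*} [MeasurableSpace Ω]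
    [NormedAddCommGroup E] {μ : Measure Ω} {f : ℕ → Ω → E} {F : Ω → E}
    (hint : ∀ k, Integrable (fun ω => F ω - f k ω) μ)
    (hsum : Summable fun k => ∫ ω, ‖F ω - f k ω‖ ∂μ) :
    ∀ᵐ ω ∂μ, Tendsto (fun k => f k ω) atTop (𝓝 (F ω)) := by
  have hmeas : ∀ k, AEMeasurable (fun ω => ‖F ω - f k ω‖ₑ) μ :=
    fun k => (hint k).aestronglyMeasurable.enorm
  have hfin : ∫⁻ ω, ∑' k, ‖F ω - f k ω‖ₑ ∂μ ≠ ∞ := by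
    simp_rw [lintegral_tsum hmeas, ← ofReal_integral_norm_eq_lintegral_enorm (hint _),
      ← ENNReal.ofReal_tsum_of_nonneg (fun k => integral_nonneg fun _ => norm_nonneg _) hsum]
    exact ENNReal.ofReal_ne_top
  filter_upwards [ae_lt_top' (AEMeasurable.tsum hmeas) hfin] with ω hω
  rw [tendsto_iff_enorm_sub_tendsto_zero]
  simpa only [enorm_sub_rev] using ENNReal.tendsto_atTop_zero_of_tsum_ne_top hω.ne

lemma identDistrib_of_map_shift_eq {Ω E : Type*} [MeasurableSpace Ω] [MeasurableSpace E]
    {P : Measure Ω} {Φ : ℤ → Ω → E} (hΦ : ∀ t, AEMeasurable (Φ t) P)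
    (h : P.map (fun ω t => Φ (t + 1) ω) = P.map (fun ω t => Φ t ω)) (s t : ℤ) :
    IdentDistrib (Φ s) (Φ t) P P := by
  have hsucc : ∀ t, IdentDistrib (Φ (t + 1)) (Φ t) P P := fun t =>
    { aemeasurable_fst := hΦ _
      aemeasurable_snd := hΦ _
      map_eq := by
        have := congrArg (Measure.map (Function.eval t)) h
        rwa [AEMeasurable.map_map_of_aemeasurable (measurable_pi_apply t).aemeasurable
            (aemeasurable_pi_lambda _ fun t => hΦ _),
          AEMeasurable.map_map_of_aemeasurable (measurable_pi_apply t).aemeasurable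
            (aemeasurable_pi_lambda _ hΦ)] at this }
  obtain ⟨n, rfl⟩ : ∃ n, s = t + n := ⟨s - t, by ring⟩
  induction n using Int.induction_on with
  | zero => simpa using IdentDistrib.refl (hΦ t)
  | succ i ih => simpa [← add_assoc] using (hsucc _).trans ih
  | pred i ih =>
    have := (hsucc (t + -i - 1)).symm.trans (by simpa using ih)
    rwa [← add_sub_assoc]

theorem stmt6_general {Ω : Type*} [MeasurableSpace Ω] (P : Measure Ω)
    (g : ℝ → ℝ → ℝ) (a b : ℝ) (ha : 0 ≤ a) (hb : 0 ≤ b) (hab : a + b < 1)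
    (hcontr : ∀ x x' y y' : ℝ, 0 ≤ x → 0 ≤ x' → 0 ≤ y → 0 ≤ y' →
      |g x y - g x' y'| ≤ a * |x - x'| + b * |y - y'|)
    (hgnn : ∀ x y, 0 ≤ x → 0 ≤ y → 0 ≤ g x y)
    (X : ℤ → Ω → ℝ) (Y : ℤ → Ω → ℕ)
    (hYmeas : ∀ t, Measurable (Y t))
    (hXnn : ∀ t ω, 0 ≤ X t ω)
    -- the recursion `X_t = g (X_{t−1}, Y_{t−1})`
    (hrec : ∀ t : ℤ, ∀ ω, X t ω = g (X (t - 1) ω) (Y (t - 1) ω))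
    -- stationary regime
    (hstat : Measure.map (fun ω => fun t : ℤ => (X (t + 1) ω, Y (t + 1) ω)) P =
      Measure.map (fun ω => fun t : ℤ => (X t ω, Y t ω)) P)
    (hint : ∀ t, Integrable (X t) P) :
    (∀ k : ℕ, 1 ≤ k → ∀ t : ℤ,
      ∫ ω, |X t ω - gIter g k 0 (fun j => (Y (t - j) ω : ℝ))| ∂P ≤
        a ^ k * ∫ ω, X (t - k) ω ∂P) ∧
    ∃ ginf : (ℕ → ℕ) → ℝ, Measurable ginf ∧ (∀ v, 0 ≤ ginf v) ∧
      ∀ t : ℤ, ∀ᵐ ω ∂P, X t ω = ginf fun j => Y (t - 1 - j) ω := by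
  have hpt : ∀ (k : ℕ) t ω,
      |X t ω - gIter g k 0 fun j => (Y (t - j) ω : ℝ)| ≤ a ^ k * X (t - k) ω :=
    fun k t ω => abs_sub_gIter_zero_le (y := fun s => (Y s ω : ℝ)) ha
      (fun x x' y hx hx' hy => by simpa using hcontr x x' y y hx hx' hy hy) hgnn
      (hXnn · ω) (fun _ => Nat.cast_nonneg _) (hrec · ω) k t
  have hdiff : ∀ (k : ℕ) t,
      Integrable (fun ω => X t ω - gIter g k 0 fun j => (Y (t - j) ω : ℝ)) P :=
    fun k t => ((hint _).const_mul (a ^ k)).mono' ((hint t).aestronglyMeasurable.sub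
      ((measurable_gIter_natCast g k 0).comp
        (measurable_pi_lambda _ fun j => hYmeas (t - j))).aestronglyMeasurable)
      (ae_of_all _ (hpt k t))
  have hL1 : ∀ (k : ℕ) t, ∫ ω, |X t ω - gIter g k 0 fun j => (Y (t - j) ω : ℝ)| ∂P ≤
      a ^ k * ∫ ω, X (t - k) ω ∂P := fun k t =>
    (integral_mono (hdiff k t).abs ((hint _).const_mul _) (hpt k t)).trans_eq
      (integral_const_mul _ _)
  have hmean : ∀ (k : ℕ) t, ∫ ω, X (t - k) ω ∂P = ∫ ω, X t ω ∂P := fun k t =>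
    ((identDistrib_of_map_shift_eq (Φ := fun t ω => (X t ω, Y t ω))
      (fun t => (hint t).aemeasurable.prodMk (hYmeas t).aemeasurable) hstat (t - k) t).comp
        measurable_fst).integral_eq
  refine ⟨fun k _ => hL1 k, gLimit g, measurable_gLimit g, fun _ => ENNReal.toReal_nonneg,
    fun t => ?_⟩
  have hsum : Summable fun k : ℕ => ∫ ω, ‖X t ω - gIter g k 0 fun j => (Y (t - j) ω : ℝ)‖ ∂P :=
    ((summable_geometric_of_lt_one ha (by linarith)).mul_right (∫ ω, X t ω ∂P)).of_nonneg_of_le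
      (fun _ => integral_nonneg fun _ => norm_nonneg _)
      (fun k => by simpa only [Real.norm_eq_abs, hmean] using hL1 k t)
  filter_upwards [ae_tendsto_of_summable_integral_norm_sub (hdiff · t) hsum] with ω hω
  refine (gLimit_eq_of_tendsto (hXnn t ω)
    (hω.congr fun k => gIter_congr k 0 fun j hj _ => ?_)).symm
  rw [show t - 1 - ((j - 1 : ℕ) : ℤ) = t - j by omega]

/-- for the stationary observation-driven model with count observations,
`E |X_t − g_k (0, Y_{t−1}, …, Y_{t−k})| ≤ aᵏ E X_{t−k}` for every `k ≥ 1`; consequently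
there is a measurable `g_∞ : ℕ₀^∞ → [0,∞)` with `X_t = g_∞ (Y_{t−1}, Y_{t−2}, …)` a.s. -/
theorem stmt6 {Ω : Type*} [MeasurableSpace Ω] (P : Measure Ω) [IsProbabilityMeasure P]
    (μ : Measure ℝ) [SigmaFinite μ] (A hden B : ℝ → ℝ)
    (hB : StrictMono B) (hAB : ∀ η, HasDerivAt A (B η) η)
    (g : ℝ → ℝ → ℝ) (a b : ℝ) (ha : 0 ≤ a) (hb : 0 ≤ b) (hab : a + b < 1)
    (hcontr : ∀ x x' y y' : ℝ, 0 ≤ x → 0 ≤ x' → 0 ≤ y → 0 ≤ y' →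
      |g x y - g x' y'| ≤ a * |x - x'| + b * |y - y'|)
    (hgnn : ∀ x y, 0 ≤ x → 0 ≤ y → 0 ≤ g x y)
    (X : ℤ → Ω → ℝ) (Y : ℤ → Ω → ℕ)
    (hXmeas : ∀ t, Measurable (X t)) (hYmeas : ∀ t, Measurable (Y t))
    (hXnn : ∀ t ω, 0 ≤ X t ω)
    -- the recursion `X_t = g (X_{t−1}, Y_{t−1})`
    (hrec : ∀ t : ℤ, ∀ ω, X t ω = g (X (t - 1) ω) (Y (t - 1) ω))
    -- the conditional distribution of `Y_t` given the past is the exponential family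
    -- member with mean `X_t`
    (hcdist : ∀ t : ℤ, ∀ᵐ ω ∂P,
      condDistrib (fun ω' => (Y t ω' : ℝ)) (fun ω' => fun j : ℕ => Y (t - 1 - j) ω') P
          ((fun j : ℕ => Y (t - 1 - j) ω)) =
        expFam μ A hden (Function.invFun B (X t ω)))
    -- stationary regime
    (hstat : Measure.map (fun ω => fun t : ℤ => (X (t + 1) ω, Y (t + 1) ω)) P =
      Measure.map (fun ω => fun t : ℤ => (X t ω, Y t ω)) P)
    (hint : ∀ t, Integrable (X t) P) :
    (∀ k : ℕ, 1 ≤ k → ∀ t : ℤ,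
      ∫ ω, |X t ω - gIter g k 0 (fun j => (Y (t - j) ω : ℝ))| ∂P ≤
        a ^ k * ∫ ω, X (t - k) ω ∂P) ∧
    ∃ ginf : (ℕ → ℕ) → ℝ, Measurable ginf ∧ (∀ v, 0 ≤ ginf v) ∧
      ∀ t : ℤ, ∀ᵐ ω ∂P, X t ω = ginf fun j => Y (t - 1 - j) ω :=
  stmt6_general P g a b ha hb hab hcontr hgnn X Y hYmeas hXnn hrec hstat hint
end

section
/- Let Θ ⊂ ℝ^d be a compact set and (Ω, F, P) a probability space. Let {f_θ : ℝ^∞ → [−∞, ∞], θ ∈ Θ} be a family of Borel measurable functions such that (i) θ ↦ f_θ(x) is upper-semicontinuous for every x ∈ ℝ^∞, (ii) sup_{θ ∈ C} f_θ(x) is Borel measurable for every compact C ⊂ Θ, and (iii) E{sup_{θ∈Θ} f_θ(X)} < ∞ for some random variable X on (Ω,F,P). Then (a) the map θ ↦ E[f_θ(X)] is upper-semicontinuous, and (b) if {X_t : Ω → ℝ^∞, t ∈ ℤ} is an ergodic stationary process on (Ω,F,P) with each X_t distributed as X, then for every compact set C ⊂ Θ, limsup_{n→∞} sup_{θ∈C}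 (1/n) Σ_{i=1}^n f_θ(X_i) ≤ sup_{θ∈C} E{f_θ(X_1)} almost surely. -/
/-!
Upper semicontinuity in `θ` and the integrable envelope `sup_Θ f_θ` let monotone convergence
(from above) pass `E f_θ₀` through the infimum over shrinking balls: for every `b > E f_θ₀`
some ball `B` around `θ₀` has `E sup_{Θ ∩ B} f_θ < b`. This gives (a) at once. For (b), take a
rational `q > sup_C E f_θ` and cover `C` by finitely many such balls; on each ball the averages
of `f_θ` are dominated by those of the ball supremum, whose limsup is at most its mean by the
upper half of Birkhoff's ergodic theorem. That half follows from Garsia's maximal ergodic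
inequality for integrable real functions, and extends to `[-∞, ∞]`-valued functions with
integrable positive part by truncating below at `-M` and letting `M → ∞`, once more by
monotone convergence.
-/

open MeasureTheory Filter

/-- The positive part of an extended real number, as an extended nonnegative real. -/
noncomputable def erealPos (x : EReal) : ENNReal :=
  if x = ⊤ then ⊤ else ENNReal.ofReal x.toReal

/-- The expectation, in the extended sense, of an `EReal`-valued function. -/
noncomputable def eIntegral {Ω : Type*} [MeasurableSpace Ω] (P : Measure Ω)
    (g : Ω → EReal) : EReal :=
  ((∫⁻ ω, erealPos (g ω) ∂P : ENNReal) : EReal) - ((∫⁻ ω, erealPos (-g ω) ∂P : ENNReal) : EReal)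

open Topology

section ERealLemmas

@[simp] lemma erealPos_eq_toENNReal (x : EReal) : erealPos x = x.toENNReal := rfl

lemma EReal.toENNReal_mono : Monotone EReal.toENNReal := fun _ _ => EReal.toENNReal_le_toENNReal

lemma EReal.abs_toReal_max_le (x : EReal) {c : ℝ} (hc : 0 ≤ c) :
    |(max x (-c : ℝ)).toReal| ≤ x.toENNReal.toReal + c := by
  induction x using EReal.rec with
  | bot => simp [abs_of_nonneg hc]
  | top => simp [hc]
  | coe x =>
    rw [← Monotone.map_max EReal.coe_strictMono.monotone, EReal.toReal_coe,
      EReal.real_coe_toENNReal, ENNReal.toReal_ofReal', abs_le]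
    constructor <;> cases max_cases x (-c) <;> cases max_cases x 0 <;> linarith

lemma EReal.iInf_max_neg_natCast (x : EReal) : ⨅ M : ℕ, max x ((-M : ℝ) : EReal) = x := by
  have hbot : ⨅ M : ℕ, ((-M : ℝ) : EReal) = ⊥ := iInf_eq_bot.mpr fun b hb => by
    obtain ⟨r, -, hrb⟩ := EReal.exists_between_coe_real hb
    obtain ⟨M, hM⟩ := exists_nat_gt (-r)
    exact ⟨M, lt_trans (EReal.coe_lt_coe_iff.mpr (by linarith)) hrb⟩
  rw [← sup_iInf_eq, hbot, sup_bot_eq]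

lemma limsup_inv_mul_le_of_succ {u v : ℕ → ℝ} {c : ℝ} (h : ∀ n, u (n + 1) = c + v n) :
    limsup (fun n : ℕ => (((n : ℝ)⁻¹ * u n : ℝ) : EReal)) atTop ≤
      limsup (fun n : ℕ => (((n : ℝ)⁻¹ * v n : ℝ) : EReal)) atTop := by
  refine le_of_forall_lt_imp_le_of_dense fun b hb => ?_
  obtain ⟨a, hba, ha⟩ := EReal.exists_between_coe_real hb
  obtain ⟨b', hbb', hb'a⟩ := EReal.exists_between_coe_real hba
  have hab : b' < a := EReal.coe_lt_coe_iff.mp hb'a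
  refine hbb'.le.trans (le_limsup_of_frequently_le ?_)
  obtain ⟨N₀, hN₀⟩ := exists_nat_gt ((c - a) / (a - b'))
  have hfreq := frequently_atTop.mp (frequently_lt_of_lt_limsup (by isBoundedDefault) ha)
  refine frequently_atTop.mpr fun N => ?_
  obtain ⟨m, hm, hlt⟩ := hfreq (N + N₀ + 2)
  obtain ⟨n, rfl⟩ := Nat.exists_eq_add_one.mpr (show 0 < m by omega)
  refine ⟨n, by omega, EReal.coe_le_coe_iff.mpr ?_⟩
  have hn : (N₀ : ℝ) ≤ n := by exact_mod_cast (by omega : N₀ ≤ n)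
  have hnpos : (0 : ℝ) < n := by exact_mod_cast (by omega : 0 < n)
  rw [EReal.coe_lt_coe_iff, h, Nat.cast_add_one, lt_inv_mul_iff₀ (by positivity)] at hlt
  rw [le_inv_mul_iff₀ hnpos]
  rw [div_lt_iff₀ (by linarith)] at hN₀
  nlinarith

end ERealLemmas

section EIntegral

variable {α : Type*} [MeasurableSpace α] {μ : Measure α}

lemma eIntegral_mono_ae {g h : α → EReal} (hgh : g ≤ᵐ[μ] h) :
    eIntegral μ g ≤ eIntegral μ h := by
  refine EReal.sub_le_sub ?_ ?_ <;> rw [EReal.coe_ennreal_le_coe_ennreal_iff] <;>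
    refine lintegral_mono_ae (hgh.mono fun x hx => EReal.toENNReal_mono ?_)
  exacts [hx, EReal.neg_le_neg_iff.mpr hx]

lemma eIntegral_mono {g h : α → EReal} (hgh : g ≤ h) : eIntegral μ g ≤ eIntegral μ h :=
  eIntegral_mono_ae (.of_forall hgh)

lemma eIntegral_congr_ae {g h : α → EReal} (hgh : g =ᵐ[μ] h) : eIntegral μ g = eIntegral μ h :=
  (eIntegral_mono_ae hgh.le).antisymm (eIntegral_mono_ae hgh.symm.le)

lemma eIntegral_map {β : Type*} [MeasurableSpace β] {Y : α → β} (hY : AEMeasurable Y μ)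
    {g : β → EReal} (hg : Measurable g) :
    eIntegral (μ.map Y) g = eIntegral μ (g ∘ Y) := by
  simp only [eIntegral, erealPos_eq_toENNReal, Function.comp_apply]
  rw [lintegral_map' hg.ereal_toENNReal.aemeasurable hY,
    lintegral_map' (f := fun b => (-g b).toENNReal) hg.neg.ereal_toENNReal.aemeasurable hY]

lemma eIntegral_coe {g : α → ℝ} (hg : Integrable g μ) :
    eIntegral μ (fun x => (g x : EReal)) = ∫ x, g x ∂μ := by
  simp only [eIntegral, erealPos_eq_toENNReal, ← EReal.coe_neg, EReal.real_coe_toENNReal]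
  rw [integral_eq_lintegral_pos_part_sub_lintegral_neg_part hg, EReal.coe_sub,
    EReal.coe_ennreal_toReal hg.lintegral_lt_top.ne,
    EReal.coe_ennreal_toReal (hg.neg.lintegral_lt_top (f := fun x => -g x)).ne]

lemma eIntegral_iInf {g : ℕ → α → EReal} (hm : ∀ k, Measurable (g k)) (hanti : Antitone g)
    (h0 : ∫⁻ x, erealPos (g 0 x) ∂μ ≠ ⊤) :
    eIntegral μ (fun x => ⨅ k, g k x) = ⨅ k, eIntegral μ (g k) := by
  set P : ℕ → ENNReal := fun k => ∫⁻ x, (g k x).toENNReal ∂μ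
  set N : ℕ → ENNReal := fun k => ∫⁻ x, (-g k x).toENNReal ∂μ
  have hPanti : Antitone P := fun j k hjk =>
    lintegral_mono fun x => EReal.toENNReal_mono (hanti hjk x)
  have hNmono : Monotone N := fun j k hjk =>
    lintegral_mono fun x => EReal.toENNReal_mono (EReal.neg_le_neg_iff.mpr (hanti hjk x))
  have hP : ∫⁻ x, (⨅ k, g k x).toENNReal ∂μ = ⨅ k, P k := by
    simp_rw [Monotone.map_iInf_of_continuousAt EReal.continuous_toENNReal.continuousAt
      EReal.toENNReal_mono EReal.toENNReal_top, Function.comp_def]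
    exact lintegral_iInf (fun k => (hm k).ereal_toENNReal)
      (fun j k hjk x => EReal.toENNReal_mono (hanti hjk x)) h0
  have hN : ∫⁻ x, (-⨅ k, g k x).toENNReal ∂μ = ⨆ k, N k := by
    have hneg (x : α) : -⨅ k, g k x = ⨆ k, -g k x := EReal.negOrderIso.map_iInf _
    simp_rw [hneg, Monotone.map_iSup_of_continuousAt EReal.continuous_toENNReal.continuousAt
      EReal.toENNReal_mono EReal.toENNReal_bot]
    exact lintegral_iSup (fun k => (hm k).neg.ereal_toENNReal)
      (fun j k hjk x => EReal.toENNReal_mono (EReal.neg_le_neg_iff.mpr (hanti hjk x)))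
  have hPtop : ⨅ k, P k ≠ ⊤ := ne_top_of_le_ne_top h0 (iInf_le P 0)
  have hlim : Tendsto (fun k => eIntegral μ (g k)) atTop
      (𝓝 (((⨅ k, P k : ENNReal) : EReal) - ((⨆ k, N k : ENNReal) : EReal))) :=
    (EReal.continuousAt_add (.inl (by simpa using hPtop)) (.inr (by simp))).tendsto.comp
      (((continuous_coe_ennreal_ereal.tendsto _).comp (tendsto_atTop_iInf hPanti)).prodMk_nhds
        ((continuous_coe_ennreal_ereal.tendsto _).comp (tendsto_atTop_iSup hNmono)).neg)
  rw [tendsto_nhds_unique (tendsto_atTop_iInf fun j k hjk => eIntegral_mono (hanti hjk)) hlim]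
  simp only [eIntegral, erealPos_eq_toENNReal, hP, hN]

end EIntegral

section BirkhoffSum

variable {α : Type*} {T : α → α} {g : α → ℝ}

noncomputable def birkhoffMax (T : α → α) (g : α → ℝ) (N : ℕ) : α → ℝ :=
  (Finset.range (N + 1)).sup' Finset.nonempty_range_add_one (birkhoffSum T g)

lemma birkhoffSum_le_birkhoffMax {n N : ℕ} (h : n ≤ N) (x : α) :
    birkhoffSum T g n x ≤ birkhoffMax T g N x := by
  rw [birkhoffMax, Finset.sup'_apply]
  exact Finset.le_sup' (fun k => birkhoffSum T g k x) (Finset.mem_range_succ_iff.mpr h)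

lemma exists_birkhoffMax_eq (N : ℕ) (x : α) :
    ∃ n ≤ N, birkhoffMax T g N x = birkhoffSum T g n x := by
  obtain ⟨n, hn, heq⟩ := Finset.exists_mem_eq_sup' Finset.nonempty_range_add_one
    (fun k => birkhoffSum T g k x)
  exact ⟨n, Finset.mem_range_succ_iff.mp hn, by rw [birkhoffMax, Finset.sup'_apply, heq]⟩

lemma birkhoffMax_nonneg (N : ℕ) (x : α) : 0 ≤ birkhoffMax T g N x :=
  birkhoffSum_le_birkhoffMax (Nat.zero_le N) x

lemma birkhoffMax_le_add_comp {N : ℕ} {x : α} (hx : 0 < birkhoffMax T g N x) :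
    birkhoffMax T g N x ≤ g x + birkhoffMax T g N (T x) := by
  obtain ⟨_ | n, hn, heq⟩ := exists_birkhoffMax_eq (T := T) (g := g) N x
  · simp [heq] at hx
  · rw [heq, birkhoffSum_succ']
    gcongr
    exact birkhoffSum_le_birkhoffMax (by omega) _

lemma limsup_birkhoffAverage_le_apply (T : α → α) (g : α → ℝ) (x : α) :
    limsup (fun n => ((birkhoffAverage ℝ T g n x : ℝ) : EReal)) atTop ≤
      limsup (fun n => ((birkhoffAverage ℝ T g n (T x) : ℝ) : EReal)) atTop :=
  limsup_inv_mul_le_of_succ (c := g x) fun n => birkhoffSum_succ' T g n x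

lemma exists_birkhoffSum_sub_pos_of_lt_limsup {a : ℝ} {x : α}
    (ha : (a : EReal) < limsup (fun n => ((birkhoffAverage ℝ T g n x : ℝ) : EReal)) atTop) :
    ∃ n, 0 < birkhoffSum T (fun y => g y - a) n x := by
  obtain ⟨n, hn, hlt⟩ :=
    frequently_atTop.mp (frequently_lt_of_lt_limsup (by isBoundedDefault) ha) 1
  refine ⟨n, ?_⟩
  have hsum : birkhoffSum T (fun y => g y - a) n x = birkhoffSum T g n x - n * a := by
    simp [birkhoffSum, Finset.sum_sub_distrib]
  rw [EReal.coe_lt_coe_iff, birkhoffAverage, smul_eq_mul,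
    lt_inv_mul_iff₀ (by exact_mod_cast hn)] at hlt
  linarith

lemma birkhoffSum_le_coe_birkhoffSum {φ : α → EReal} {ψ : α → ℝ} {x : α}
    (h : ∀ i, φ (T^[i] x) ≤ ψ (T^[i] x)) (n : ℕ) :
    birkhoffSum T φ n x ≤ ((birkhoffSum T ψ n x : ℝ) : EReal) := by
  induction n with
  | zero => simp
  | succ n ih =>
    rw [birkhoffSum_succ, birkhoffSum_succ, EReal.coe_add]
    exact add_le_add ih (h n)

end BirkhoffSum

section ErgodicTheorem

variable {α : Type*} [MeasurableSpace α] {μ : Measure α} {T : α → α} {g : α → ℝ}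

lemma measurable_birkhoffSum (hT : Measurable T) (hg : Measurable g) (n : ℕ) :
    Measurable (birkhoffSum T g n) :=
  Finset.measurable_sum _ fun i _ => hg.comp (hT.iterate i)

lemma integrable_birkhoffSum (hT : MeasurePreserving T μ μ) (hg : Integrable g μ) (n : ℕ) :
    Integrable (birkhoffSum T g n) μ :=
  integrable_finsetSum _ fun i _ => (hT.iterate i).integrable_comp_of_integrable hg

lemma measurable_birkhoffMax (hT : Measurable T) (hg : Measurable g) (N : ℕ) :
    Measurable (birkhoffMax T g N) :=
  Finset.measurable_sup' _ fun n _ => measurable_birkhoffSum hT hg n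

lemma integrable_birkhoffMax (hT : MeasurePreserving T μ μ) (hg : Integrable g μ) (N : ℕ) :
    Integrable (birkhoffMax T g N) μ :=
  Finset.sup'_induction (p := (Integrable · μ)) _ _ (fun _ h₁ _ h₂ => h₁.sup h₂)
    fun n _ => integrable_birkhoffSum hT hg n

lemma MeasureTheory.MeasurePreserving.setIntegral_birkhoffMax_pos_nonneg
    (hT : MeasurePreserving T μ μ) (hgm : Measurable g) (hg : Integrable g μ) (N : ℕ) :
    0 ≤ ∫ x in {x | 0 < birkhoffMax T g N x}, g x ∂μ := by
  set M := birkhoffMax T g N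
  set E := {x | 0 < M x}
  have hE : MeasurableSet E :=
    measurableSet_lt measurable_const (measurable_birkhoffMax hT.measurable hgm N)
  have hM := integrable_birkhoffMax hT hg N
  have hMT : Integrable (fun x => M (T x)) μ := hT.integrable_comp_of_integrable hM
  have hMT_eq : ∫ x, M (T x) ∂μ = ∫ x, M x ∂μ := by
    rw [← integral_map hT.measurable.aemeasurable (by rw [hT.map_eq]; exact hM.1), hT.map_eq]
  have hME : ∫ x in E, M x ∂μ = ∫ x, M x ∂μ :=
    setIntegral_eq_integral_of_forall_compl_eq_zero fun x hx =>
      (birkhoffMax_nonneg N x).antisymm' (not_lt.mp hx)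
  calc 0 = ∫ x, M x ∂μ - ∫ x, M (T x) ∂μ := by rw [hMT_eq, sub_self]
    _ ≤ ∫ x in E, M x ∂μ - ∫ x in E, M (T x) ∂μ := by
        rw [hME]
        linarith [setIntegral_le_integral (s := E) hMT
          (.of_forall fun x => birkhoffMax_nonneg N (T x))]
    _ = ∫ x in E, (M x - M (T x)) ∂μ := (integral_sub hM.integrableOn hMT.integrableOn).symm
    _ ≤ ∫ x in E, g x ∂μ := setIntegral_mono_on (hM.sub hMT).integrableOn hg.integrableOn hE
        fun x hx => by linarith [birkhoffMax_le_add_comp hx]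

theorem MeasureTheory.MeasurePreserving.setIntegral_exists_birkhoffSum_pos_nonneg
    (hT : MeasurePreserving T μ μ) (hgm : Measurable g) (hg : Integrable g μ) :
    0 ≤ ∫ x in {x | ∃ n, 0 < birkhoffSum T g n x}, g x ∂μ := by
  have hmeas (N : ℕ) : MeasurableSet {x | 0 < birkhoffMax T g N x} :=
    measurableSet_lt measurable_const (measurable_birkhoffMax hT.measurable hgm N)
  have hmono : Monotone fun N => {x | 0 < birkhoffMax T g N x} := fun N N' hNN' x hx => by
    obtain ⟨n, hn, heq⟩ := exists_birkhoffMax_eq (T := T) (g := g) N x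
    exact (heq ▸ hx : 0 < birkhoffSum T g n x).trans_le
      (birkhoffSum_le_birkhoffMax (hn.trans hNN') x)
  have hunion : ⋃ N, {x | 0 < birkhoffMax T g N x} = {x | ∃ n, 0 < birkhoffSum T g n x} := by
    ext x
    simp only [Set.mem_iUnion, Set.mem_ofPred_eq]
    constructor
    · rintro ⟨N, hN⟩
      obtain ⟨n, -, heq⟩ := exists_birkhoffMax_eq (T := T) (g := g) N x
      exact ⟨n, heq ▸ hN⟩
    · rintro ⟨n, hn⟩
      exact ⟨n, hn.trans_le (birkhoffSum_le_birkhoffMax le_rfl x)⟩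
  rw [← hunion]
  exact ge_of_tendsto' (tendsto_setIntegral_of_monotone hmeas hmono hg.integrableOn)
    (hT.setIntegral_birkhoffMax_pos_nonneg hgm hg)

theorem MeasureTheory.MeasurePreserving.integral_nonneg_of_ae_exists_birkhoffSum_pos
    (hT : MeasurePreserving T μ μ) (hgm : Measurable g) (hg : Integrable g μ)
    (hpos : ∀ᵐ x ∂μ, ∃ n, 0 < birkhoffSum T g n x) : 0 ≤ ∫ x, g x ∂μ := by
  simpa only [Measure.restrict_eq_self_of_ae_mem (s := {x | ∃ n, 0 < birkhoffSum T g n x}) hpos]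
    using hT.setIntegral_exists_birkhoffSum_pos_nonneg hgm hg

theorem Ergodic.ae_limsup_birkhoffAverage_le [IsProbabilityMeasure μ] (hT : Ergodic T μ)
    (hgm : Measurable g) (hg : Integrable g μ) :
    ∀ᵐ x ∂μ, limsup (fun n => ((birkhoffAverage ℝ T g n x : ℝ) : EReal)) atTop ≤
      ∫ x, g x ∂μ := by
  set L : α → EReal := fun x => limsup (fun n => ((birkhoffAverage ℝ T g n x : ℝ) : EReal)) atTop
  have hL : Measurable L := Measurable.limsup fun n =>
    ((measurable_birkhoffSum hT.measurable hgm n).const_mul _).coe_real_ereal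
  have hbound (a : ℝ) (ha : ∫ x, g x ∂μ < a) : ∀ᵐ x ∂μ, L x ≤ a := by
    set B := {x | (a : EReal) < L x}
    have hB : B ≤ᵐ[μ] T ⁻¹' B := LE.le.eventuallyLE fun x hx =>
      hx.trans_le (limsup_birkhoffAverage_le_apply T g x)
    -- `B` is forward invariant, so null or conull; conull would force `a ≤ ∫ g`.
    rcases hT.ae_empty_or_univ_of_ae_le_preimage (hL measurableSet_Ioi).nullMeasurableSet hB
      with hB0 | hB1
    · filter_upwards [measure_eq_zero_iff_ae_notMem.mp (ae_eq_empty.mp hB0)] with x hx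
      exact not_lt.mp hx
    · have := hT.toMeasurePreserving.integral_nonneg_of_ae_exists_birkhoffSum_pos
        (hgm.sub measurable_const) (hg.sub (integrable_const a))
        ((ae_iff.mpr (ae_eq_univ.mp hB1)).mono fun x hx =>
          exists_birkhoffSum_sub_pos_of_lt_limsup hx)
      simp [integral_sub hg (integrable_const a)] at this
      linarith
  have hlim : Tendsto (fun m : ℕ => ((∫ x, g x ∂μ + 1 / (m + 1) : ℝ) : EReal)) atTop
      (𝓝 ((∫ x, g x ∂μ : ℝ) : EReal)) := by
    have h := tendsto_one_div_add_atTop_nhds_zero_nat.const_add (∫ x, g x ∂μ)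
    rw [add_zero] at h
    exact (continuous_coe_real_ereal.tendsto _).comp h
  filter_upwards [ae_all_iff.mpr fun m : ℕ =>
    hbound _ (lt_add_of_pos_right _ m.one_div_pos_of_nat)] with x hx
  exact ge_of_tendsto' hlim hx

theorem Ergodic.ae_limsup_inv_mul_birkhoffSum_le_eIntegral [IsProbabilityMeasure μ]
    (hT : Ergodic T μ) {φ : α → EReal} (hφ : Measurable φ)
    (hpos : ∫⁻ x, erealPos (φ x) ∂μ ≠ ⊤) :
    ∀ᵐ x ∂μ, limsup (fun n : ℕ => (((n : ℝ)⁻¹ : ℝ) : EReal) * birkhoffSum T φ n x) atTop ≤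
      eIntegral μ φ := by
  set φ' : ℕ → α → EReal := fun M x => max (φ x) ((-M : ℝ) : EReal)
  set ψ : ℕ → α → ℝ := fun M x => (φ' M x).toReal
  have hφ'm (M : ℕ) : Measurable (φ' M) := hφ.max measurable_const
  have hψ (M : ℕ) : Integrable (ψ M) μ :=
    ((integrable_toReal_of_lintegral_ne_top hφ.ereal_toENNReal.aemeasurable hpos).add
      (integrable_const (M : ℝ))).mono' (hφ'm M).ereal_toReal.aestronglyMeasurable
      (.of_forall fun x => EReal.abs_toReal_max_le (φ x) M.cast_nonneg)
  have hne_top : ∀ᵐ x ∂μ, φ x ≠ ⊤ := (ae_lt_top hφ.ereal_toENNReal hpos).mono fun x hx =>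
    EReal.toENNReal_ne_top_iff.mp hx.ne
  have hφ'_ne_top (M : ℕ) {x : α} (hx : φ x ≠ ⊤) : φ' M x ≠ ⊤ :=
    (max_lt hx.lt_top (EReal.coe_lt_top _)).ne
  have hφ'ψ (M : ℕ) : ∀ᵐ x ∂μ, φ' M x = ψ M x := hne_top.mono fun x hx =>
    (EReal.coe_toReal (hφ'_ne_top M hx) ((EReal.bot_lt_coe _).trans_le le_sup_right).ne').symm
  have horbit : ∀ᵐ x ∂μ, ∀ i, φ (T^[i] x) ≠ ⊤ := ae_all_iff.mpr fun i =>
    (hT.toMeasurePreserving.iterate i).quasiMeasurePreserving.ae hne_top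
  have hbound (M : ℕ) : ∀ᵐ x ∂μ,
      limsup (fun n : ℕ => (((n : ℝ)⁻¹ : ℝ) : EReal) * birkhoffSum T φ n x) atTop ≤
        eIntegral μ (φ' M) := by
    rw [eIntegral_congr_ae (hφ'ψ M), eIntegral_coe (hψ M)]
    filter_upwards [horbit, hT.ae_limsup_birkhoffAverage_le ((hφ'm M).ereal_toReal) (hψ M)]
      with x hx hlim
    refine (limsup_le_limsup (.of_forall fun n => ?_)).trans hlim
    rw [birkhoffAverage, smul_eq_mul, EReal.coe_mul]
    gcongr
    exact birkhoffSum_le_coe_birkhoffSum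
      (fun i => (le_max_left _ _).trans (EReal.le_coe_toReal (hφ'_ne_top M (hx i)))) n
  have h0 : ∫⁻ x, erealPos (φ' 0 x) ∂μ ≠ ⊤ := by
    simpa [φ', EReal.toENNReal_mono.map_max] using hpos
  have hanti : Antitone φ' := fun M N hMN x =>
    max_le_max le_rfl (EReal.coe_le_coe_iff.mpr (neg_le_neg (Nat.cast_le.mpr hMN)))
  filter_upwards [ae_all_iff.mpr hbound] with x hx
  calc _ ≤ ⨅ M, eIntegral μ (φ' M) := le_iInf hx
    _ = eIntegral μ φ := by
      rw [← eIntegral_iInf hφ'm hanti h0]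
      simp only [φ', EReal.iInf_max_neg_natCast]

end ErgodicTheorem

section ParametrizedFamily

variable {α Λ : Type*} [MeasurableSpace α] {μ : Measure α} [PseudoMetricSpace Λ] {Θ : Set Λ}
  {f : Λ → α → EReal}

lemma exists_eIntegral_sSup_closedBall_lt (hΘ : IsCompact Θ)
    (husc : ∀ x, UpperSemicontinuousOn (fun θ => f θ x) Θ)
    (hsupmeas : ∀ C ⊆ Θ, IsCompact C → Measurable fun x => sSup ((fun θ => f θ x) '' C))
    (hint : ∫⁻ x, erealPos (sSup ((fun θ => f θ x) '' Θ)) ∂μ ≠ ⊤)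
    {θ₀ : Λ} (hθ₀ : θ₀ ∈ Θ) {b : EReal} (hb : eIntegral μ (f θ₀) < b) :
    ∃ r > 0,
      eIntegral μ (fun x => sSup ((fun θ => f θ x) '' (Θ ∩ Metric.closedBall θ₀ r))) < b := by
  set G : ℕ → α → EReal :=
    fun k x => sSup ((fun θ => f θ x) '' (Θ ∩ Metric.closedBall θ₀ (1 / (k + 1))))
  have hGm (k : ℕ) : Measurable (G k) :=
    hsupmeas _ Set.inter_subset_left (hΘ.inter_right Metric.isClosed_closedBall)
  have hGanti : Antitone G := fun j k hjk x =>
    sSup_le_sSup (Set.image_mono (Set.inter_subset_inter_right _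
      (Metric.closedBall_subset_closedBall (Nat.one_div_le_one_div hjk))))
  have hG0 : ∫⁻ x, erealPos (G 0 x) ∂μ ≠ ⊤ := ne_top_of_le_ne_top hint <| lintegral_mono fun x =>
    EReal.toENNReal_mono (sSup_le_sSup (Set.image_mono Set.inter_subset_left))
  have hGinf (x : α) : ⨅ k, G k x = f θ₀ x := by
    refine le_antisymm (le_of_forall_gt_imp_ge_of_dense fun c hc => ?_)
      (le_iInf fun k => le_sSup ⟨θ₀, ⟨hθ₀, Metric.mem_closedBall_self (by positivity)⟩, rfl⟩)
    obtain ⟨ε, hε, hball⟩ := Metric.mem_nhdsWithin_iff.mp (husc x θ₀ hθ₀ c hc)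
    obtain ⟨k, hk⟩ := exists_nat_one_div_lt hε
    refine (iInf_le _ k).trans (sSup_le ?_)
    rintro _ ⟨θ, ⟨hθΘ, hθball⟩, rfl⟩
    exact (hball ⟨(Metric.mem_closedBall.mp hθball).trans_lt hk, hθΘ⟩).le
  have hlt : ⨅ k, eIntegral μ (G k) < b := by
    rwa [← eIntegral_iInf hGm hGanti hG0, funext hGinf]
  obtain ⟨k, hk⟩ := iInf_lt_iff.mp hlt
  exact ⟨1 / (k + 1), by positivity, hk⟩

theorem upperSemicontinuousOn_eIntegral (hΘ : IsCompact Θ)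
    (husc : ∀ x, UpperSemicontinuousOn (fun θ => f θ x) Θ)
    (hsupmeas : ∀ C ⊆ Θ, IsCompact C → Measurable fun x => sSup ((fun θ => f θ x) '' C))
    (hint : ∫⁻ x, erealPos (sSup ((fun θ => f θ x) '' Θ)) ∂μ ≠ ⊤) :
    UpperSemicontinuousOn (fun θ => eIntegral μ (f θ)) Θ := fun θ₀ hθ₀ b hb => by
  obtain ⟨r, hr, hlt⟩ := exists_eIntegral_sSup_closedBall_lt hΘ husc hsupmeas hint hθ₀ hb
  filter_upwards [inter_mem_nhdsWithin Θ (Metric.closedBall_mem_nhds θ₀ hr)] with θ hθ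
  exact (eIntegral_mono fun x => le_sSup (Set.mem_image_of_mem _ hθ)).trans_lt hlt

theorem Ergodic.ae_limsup_sSup_inv_mul_birkhoffSum_le [IsProbabilityMeasure μ] {T : α → α}
    (hT : Ergodic T μ) (hΘ : IsCompact Θ)
    (husc : ∀ x, UpperSemicontinuousOn (fun θ => f θ x) Θ)
    (hsupmeas : ∀ C ⊆ Θ, IsCompact C → Measurable fun x => sSup ((fun θ => f θ x) '' C))
    (hint : ∫⁻ x, erealPos (sSup ((fun θ => f θ x) '' Θ)) ∂μ ≠ ⊤)
    {C : Set Λ} (hCΘ : C ⊆ Θ) (hC : IsCompact C) :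
    ∀ᵐ x ∂μ, limsup (fun n : ℕ =>
        sSup ((fun θ => (((n : ℝ)⁻¹ : ℝ) : EReal) * birkhoffSum T (f θ) n x) '' C)) atTop ≤
      sSup ((fun θ => eIntegral μ (f θ)) '' C) := by
  set s := sSup ((fun θ => eIntegral μ (f θ)) '' C)
  have hq (q : ℝ) : ∀ᵐ x ∂μ, s < q → limsup (fun n : ℕ =>
      sSup ((fun θ => (((n : ℝ)⁻¹ : ℝ) : EReal) * birkhoffSum T (f θ) n x) '' C)) atTop ≤ q := by
    by_cases hsq : s < q
    swap
    · exact .of_forall fun _ h => absurd h hsq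
    choose! r hr hlt using fun θ (hθ : θ ∈ C) => exists_eIntegral_sSup_closedBall_lt hΘ husc
      hsupmeas hint (hCΘ hθ) ((le_sSup (Set.mem_image_of_mem _ hθ)).trans_lt hsq)
    obtain ⟨t, htC, hcover⟩ := hC.elim_nhds_subcover (fun θ => Metric.ball θ (r θ))
      fun θ hθ => Metric.ball_mem_nhds θ (hr θ hθ)
    set G : Λ → α → EReal :=
      fun j x => sSup ((fun θ => f θ x) '' (Θ ∩ Metric.closedBall j (r j)))
    have hG (j : Λ) : ∀ᵐ x ∂μ,
        limsup (fun n : ℕ => (((n : ℝ)⁻¹ : ℝ) : EReal) * birkhoffSum T (G j) n x) atTop ≤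
          eIntegral μ (G j) :=
      hT.ae_limsup_inv_mul_birkhoffSum_le_eIntegral
        (hsupmeas _ Set.inter_subset_left (hΘ.inter_right Metric.isClosed_closedBall))
        (ne_top_of_le_ne_top hint <| lintegral_mono fun x =>
          EReal.toENNReal_mono (sSup_le_sSup (Set.image_mono Set.inter_subset_left)))
    filter_upwards [(eventually_all_finset t).mpr fun j _ => hG j] with x hx _
    have hev : ∀ᶠ n : ℕ in atTop, ∀ j ∈ t,
        (((n : ℝ)⁻¹ : ℝ) : EReal) * birkhoffSum T (G j) n x < q :=
      (eventually_all_finset t).mpr fun j hj =>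
        eventually_lt_of_limsup_lt ((hx j hj).trans_lt (hlt j (htC j hj)))
    refine limsup_le_of_le (by isBoundedDefault) (hev.mono fun n hn => sSup_le ?_)
    rintro _ ⟨θ, hθ, rfl⟩
    obtain ⟨j, hj, hθj⟩ := Set.mem_iUnion₂.mp (hcover hθ)
    refine le_trans ?_ (hn j hj).le
    exact mul_le_mul_of_nonneg_left (Finset.sum_le_sum fun i _ =>
      le_sSup ⟨θ, ⟨hCΘ hθ, Metric.ball_subset_closedBall hθj⟩, rfl⟩)
      (EReal.coe_nonneg.mpr (by positivity))
  filter_upwards [ae_all_iff.mpr fun q : ℚ => hq q] with x hx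
  refine le_of_forall_gt_imp_ge_of_dense fun c hc => ?_
  obtain ⟨q, hsq, hqc⟩ := EReal.lt_iff_exists_rat_btwn.mp hc
  exact (hx q hsq).trans hqc.le

end ParametrizedFamily

lemma iterate_shift_apply {β : Type*} (i : ℕ) (y : ℤ → β) (t : ℤ) :
    (fun x : ℤ → β => fun t => x (t + 1))^[i] y t = y (t + i) := by
  induction i generalizing t with
  | zero => simp
  | succ i ih => rw [Function.iterate_succ_apply', ih, add_assoc, Nat.cast_succ, add_comm 1]

/-- Pfanzagl-type lemma: for a family `{f_θ, θ ∈ Θ}` (Θ ⊂ ℝ^d compact) of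
Borel functions `ℝ^∞ → [−∞,∞]` which is upper-semicontinuous in `θ`, with measurable
compact suprema, and with `E sup_{θ∈Θ} f_θ(X) < ∞`, we have:
(a) `θ ↦ E f_θ(X)` is upper-semicontinuous, and
(b) for any ergodic stationary process `{X_t}` with marginals distributed as `X`,
`limsup_n sup_{θ∈C} n⁻¹ ∑_{i=1}^n f_θ(X_i) ≤ sup_{θ∈C} E f_θ(X₁)` a.s.,
for every compact `C ⊆ Θ`. -/
theorem stmt9 {Ω : Type*} [MeasurableSpace Ω] (P : Measure Ω) [IsProbabilityMeasure P]
    (d : ℕ) (Θ : Set (Fin d → ℝ)) (hΘ : IsCompact Θ)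
    (f : (Fin d → ℝ) → (ℕ → ℝ) → EReal)
    (hfmeas : ∀ θ, Measurable (f θ))
    (husc : ∀ x : ℕ → ℝ, UpperSemicontinuousOn (fun θ => f θ x) Θ)
    (hsupmeas : ∀ C : Set (Fin d → ℝ), C ⊆ Θ → IsCompact C →
      Measurable fun x : ℕ → ℝ => sSup ((fun θ => f θ x) '' C))
    (X : Ω → ℕ → ℝ) (hX : Measurable X)
    (hint : ∫⁻ ω, erealPos (sSup ((fun θ => f θ (X ω)) '' Θ)) ∂P < ⊤) :
    UpperSemicontinuousOn (fun θ => eIntegral P fun ω => f θ (X ω)) Θ ∧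
    ∀ Xseq : ℤ → Ω → ℕ → ℝ, (∀ t, Measurable (Xseq t)) →
      Ergodic (fun x : ℤ → ℕ → ℝ => fun t => x (t + 1))
        (Measure.map (fun ω => fun t : ℤ => Xseq t ω) P) →
      (∀ t, Measure.map (Xseq t) P = Measure.map X P) →
      ∀ C : Set (Fin d → ℝ), C ⊆ Θ → IsCompact C →
        ∀ᵐ ω ∂P,
          Filter.limsup
            (fun n : ℕ => sSup ((fun θ =>
              (((n : ℝ)⁻¹ : ℝ) : EReal) * ∑ i ∈ Finset.range n, f θ (Xseq (i + 1) ω)) '' C))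
            atTop ≤
          sSup ((fun θ => eIntegral P fun ω' => f θ (Xseq 1 ω')) '' C) := by
  refine ⟨upperSemicontinuousOn_eIntegral (f := fun θ ω => f θ (X ω)) hΘ (fun ω => husc (X ω))
    (fun C hC hCc => (hsupmeas C hC hCc).comp hX) hint.ne, ?_⟩
  intro Xseq hXseq hErg hLaw C hCΘ hC
  set Y : Ω → ℤ → ℕ → ℝ := fun ω t => Xseq t ω
  have hY : Measurable Y := measurable_pi_lambda _ hXseq
  have := Measure.isProbabilityMeasure_map (μ := P) hY.aemeasurable
  have hsupΘ : Measurable fun x => erealPos (sSup ((fun θ => f θ x) '' Θ)) :=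
    (hsupmeas Θ subset_rfl hΘ).ereal_toENNReal
  have hmarg : (P.map Y).map (fun y => y 1) = P.map X := by
    rw [Measure.map_map (measurable_pi_apply 1) hY]
    exact hLaw 1
  have hint' : ∫⁻ y, erealPos (sSup ((fun θ => f θ (y 1)) '' Θ)) ∂P.map Y ≠ ⊤ := by
    rw [← lintegral_map hsupΘ hX, ← hmarg, lintegral_map hsupΘ (measurable_pi_apply 1)] at hint
    exact hint.ne
  have hsum (θ : Fin d → ℝ) (n : ℕ) (ω : Ω) :
      birkhoffSum (fun x : ℤ → ℕ → ℝ => fun t => x (t + 1)) (fun y => f θ (y 1)) n (Y ω) =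
        ∑ i ∈ Finset.range n, f θ (Xseq (i + 1) ω) :=
    Finset.sum_congr rfl fun i _ => by dsimp only; rw [iterate_shift_apply, add_comm]
  have hmean (θ : Fin d → ℝ) : eIntegral (P.map Y) (fun y => f θ (y 1)) =
      eIntegral P fun ω => f θ (Xseq 1 ω) :=
    eIntegral_map hY.aemeasurable ((hfmeas θ).comp (measurable_pi_apply 1))
  filter_upwards [ae_of_ae_map hY.aemeasurable (hErg.ae_limsup_sSup_inv_mul_birkhoffSum_le hΘ
    (fun y => husc (y 1)) (fun C hC hCc => (hsupmeas C hC hCc).comp (measurable_pi_apply 1))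
    hint' hCΘ hC)] with ω hω
  simpa only [hsum, hmean] using hω
end

section
/- Consider the stationary linear dynamic model Y_t | F_{t−1} ∼ p(y|η_t), X_t = δ + α X_{t−1} + β Y_{t−1}, with δ > 0, α, β ≥ 0, α + β < 1. Setting d_t = Y_t − X_t, the sequence {d_t, t ∈ ℤ} is a martingale difference sequence (E(d_t | F_{t−1}) = 0), and Y_t satisfies the causal ARMA(1,1) recursion Y_t − (α+β)Y_{t−1} = δ + d_t − α d_{t−1}. Moreover, if the stationary variance γ_Y(0) = Var(Y_t) is finite, then the autocovariance function satisfies γ_Y(h) = (α+β)^{h−1} γ_Y(1) for all h ≥ 1. -/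
/-!
Since `X_t` is the `F_{t−1}`-measurable conditional mean of `Y_t`, the innovation
`d_t = Y_t − X_t` has zero conditional mean, and eliminating `X` from the recursion
gives `Y_t = δ + (α+β) Y_{t−1} + d_t − α d_{t−1}`. For `h ≥ 1`, `Y_0` is
`F_{h−1}`-measurable, so it is orthogonal to both `d_{h+1}` and `d_h`; pairing the
ARMA recursion at time `h + 1` with `Y_0 − E Y_0` therefore gives
`γ_Y(h+1) = (α+β) γ_Y(h)`. Stationarity makes every `Y_t` square integrable once `Y_0` is.
-/

open MeasureTheory ProbabilityTheory Filter

/-- The σ-algebra `F_{t−1} = σ{…, X_{t−1}, X_t, …, Y_{t−2}, Y_{t−1}}`. -/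
def condField {Ω : Type*} [MeasurableSpace Ω] (X Y : ℤ → Ω → ℝ) (t : ℤ) :
    MeasurableSpace Ω :=
  MeasurableSpace.comap (fun ω => fun j : ℕ => (X (t - j) ω, Y (t - 1 - j) ω)) inferInstance

lemma pow_sub_one_mul_of_succ_eq_mul {M : Type*} [Monoid M] {c : ℕ → M} {r : M}
    (hc : ∀ n, 1 ≤ n → c (n + 1) = r * c n) {n : ℕ} (hn : 1 ≤ n) :
    c n = r ^ (n - 1) * c 1 := by
  induction n, hn using Nat.le_induction with
  | base => simp
  | succ n hn ih =>
    rw [hc n hn, ih, ← mul_assoc, ← pow_succ', Nat.sub_add_comm hn]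

section Stationarity

variable {Ω E : Type*} [MeasurableSpace Ω] [MeasurableSpace E] {P : Measure Ω}

lemma map_eq_map_zero_of_map_shift_eq {Z : ℤ → Ω → E} (hZ : ∀ t, Measurable (Z t))
    (hshift : P.map (fun ω t => Z (t + 1) ω) = P.map (fun ω t => Z t ω)) (t : ℤ) :
    P.map (Z t) = P.map (Z 0) := by
  have hstep : ∀ s : ℤ, P.map (Z (s + 1)) = P.map (Z s) := fun s => by
    simpa [Measure.map_map (measurable_pi_apply s) (measurable_pi_lambda _ fun t => hZ _),
      Measure.map_map (measurable_pi_apply s) (measurable_pi_lambda _ hZ), Function.comp_def]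
      using congrArg (Measure.map fun z : ℤ → E => z s) hshift
  induction t using Int.induction_on with
  | zero => rfl
  | succ i ih => rw [hstep, ih]
  | pred i ih => rw [← ih, ← hstep, sub_add_cancel]

end Stationarity

section ConditionalExpectation

variable {Ω : Type*} {m m₀ : MeasurableSpace Ω} {P : Measure Ω}

lemma condExp_sub_ae_eq_zero_of_condExp_ae_eq (hm : m ≤ m₀) [SigmaFinite (P.trim hm)]
    {f g : Ω → ℝ} (hf : Integrable f P) (hg : StronglyMeasurable[m] g) (hfg : P[f|m] =ᵐ[P] g) :
    P[f - g|m] =ᵐ[P] 0 := by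
  have hg_int : Integrable g P := integrable_condExp.congr hfg
  filter_upwards [condExp_sub hf hg_int m, hfg] with ω hsub hω
  rw [hsub, Pi.sub_apply, condExp_of_stronglyMeasurable hm hg hg_int, hω, sub_self, Pi.zero_apply]

lemma integral_mul_eq_zero_of_condExp_ae_eq_zero (hm : m ≤ m₀) [SigmaFinite (P.trim hm)]
    {f g : Ω → ℝ} (hf : StronglyMeasurable[m] f) (hfg : Integrable (f * g) P)
    (hg : Integrable g P) (hg0 : P[g|m] =ᵐ[P] 0) :
    ∫ ω, f ω * g ω ∂P = 0 := by
  have hcond : P[f * g|m] =ᵐ[P] 0 := by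
    filter_upwards [condExp_mul_of_stronglyMeasurable_left hf hfg hg, hg0] with ω h h0
    simp [h, h0]
  change ∫ ω, (f * g) ω ∂P = 0
  rw [← integral_condExp hm, integral_congr_ae hcond]
  exact integral_zero Ω ℝ

end ConditionalExpectation

section Covariance

variable {Ω : Type*} [MeasurableSpace Ω] {P : Measure Ω} [IsFiniteMeasure P]

lemma integral_mul_sub_eq_of_recursion {Z X₀ Y₀ X₁ Y₁ : Ω → ℝ} {δ α β : ℝ} (m : ℝ)
    (hZ : MemLp Z 2 P) (hX₀ : MemLp X₀ 2 P) (hY₀ : MemLp Y₀ 2 P)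
    (hX₁ : MemLp X₁ 2 P) (hY₁ : MemLp Y₁ 2 P)
    (hrec : ∀ ω, X₁ ω = δ + α * X₀ ω + β * Y₀ ω) (hZ0 : ∫ ω, Z ω ∂P = 0)
    (h₀ : ∫ ω, Z ω * (Y₀ ω - X₀ ω) ∂P = 0) (h₁ : ∫ ω, Z ω * (Y₁ ω - X₁ ω) ∂P = 0) :
    ∫ ω, Z ω * (Y₁ ω - m) ∂P = (α + β) * ∫ ω, Z ω * (Y₀ ω - m) ∂P := by
  have hc : MemLp (fun _ => m) 2 P := memLp_const m
  have hdecomp : (fun ω => Z ω * (Y₁ ω - m)) = fun ω =>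
      (α + β) * (Z ω * (Y₀ ω - m)) + (δ + (α + β) * m - m) * Z ω
        + Z ω * (Y₁ ω - X₁ ω) - α * (Z ω * (Y₀ ω - X₀ ω)) := by
    funext ω
    rw [hrec]
    ring
  have i₀ : Integrable (fun ω => Z ω * (Y₀ ω - m)) P := hZ.integrable_mul (hY₀.sub hc)
  have i₁ : Integrable (fun ω => Z ω * (Y₁ ω - X₁ ω)) P := hZ.integrable_mul (hY₁.sub hX₁)
  have i₂ : Integrable (fun ω => Z ω * (Y₀ ω - X₀ ω)) P := hZ.integrable_mul (hY₀.sub hX₀)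
  have i₃ : Integrable (fun ω => (α + β) * (Z ω * (Y₀ ω - m)) + (δ + (α + β) * m - m) * Z ω) P :=
    (i₀.const_mul _).add ((hZ.integrable one_le_two).const_mul _)
  have i₄ : Integrable (fun ω => (α + β) * (Z ω * (Y₀ ω - m)) + (δ + (α + β) * m - m) * Z ω
      + Z ω * (Y₁ ω - X₁ ω)) P := i₃.add i₁
  rw [hdecomp, integral_sub i₄ (i₂.const_mul _), integral_add i₃ i₁,
    integral_add (i₀.const_mul _) ((hZ.integrable one_le_two).const_mul _), integral_const_mul,
    integral_const_mul, integral_const_mul, hZ0, h₀, h₁]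
  ring

end Covariance

section Model

variable {Ω : Type*} [MeasurableSpace Ω] {X Y : ℤ → Ω → ℝ}

lemma condField_le (hX : ∀ t, Measurable (X t)) (hY : ∀ t, Measurable (Y t)) (t : ℤ) :
    condField X Y t ≤ ‹MeasurableSpace Ω› :=
  (measurable_pi_lambda _ fun _ => (hX _).prodMk (hY _)).comap_le

lemma measurable_condField_of_lt {s t : ℤ} (hst : s < t) : Measurable[condField X Y t] (Y s) := by
  have hpast : Measurable[condField X Y t] fun ω (j : ℕ) => (X (t - j) ω, Y (t - 1 - j) ω) :=
    Measurable.of_comap_le le_rfl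
  have hs : t - 1 - ((t - 1 - s).toNat : ℤ) = s := by omega
  simpa only [Function.comp_def, hs] using
    (measurable_pi_apply (t - 1 - s).toNat).snd.comp hpast

lemma memLp_of_map_shift_eq {P : Measure Ω} {p : ENNReal} (hX : ∀ t, Measurable (X t))
    (hY : ∀ t, Measurable (Y t))
    (hstat : P.map (fun ω t => (X (t + 1) ω, Y (t + 1) ω)) = P.map (fun ω t => (X t ω, Y t ω)))
    (hY₀ : MemLp (Y 0) p P) (t : ℤ) : MemLp (Y t) p P := by
  have hlaw := map_eq_map_zero_of_map_shift_eq (fun t => (hX t).prodMk (hY t)) hstat t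
  have hpair : IdentDistrib (fun ω => (X t ω, Y t ω)) (fun ω => (X 0 ω, Y 0 ω)) P P :=
    ⟨((hX t).prodMk (hY t)).aemeasurable, ((hX 0).prodMk (hY 0)).aemeasurable, hlaw⟩
  exact (hpair.comp measurable_snd).memLp_iff.mpr hY₀

end Model

theorem stmt14_general {Ω : Type*} [MeasurableSpace Ω] (P : Measure Ω) [IsProbabilityMeasure P]
    (δ α β : ℝ)
    (X Y : ℤ → Ω → ℝ)
    (hXmeas : ∀ t, Measurable (X t)) (hYmeas : ∀ t, Measurable (Y t))
    -- the linear recursion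
    (hrec : ∀ t : ℤ, ∀ ω, X t ω = δ + α * X (t - 1) ω + β * Y (t - 1) ω)
    -- `X_t` is measurable with respect to `F_{t−1}`
    (hadapted : ∀ t : ℤ, Measurable[condField X Y t] (X t))
    -- stationary regime
    (hstat : Measure.map (fun ω => fun t : ℤ => (X (t + 1) ω, Y (t + 1) ω)) P =
      Measure.map (fun ω => fun t : ℤ => (X t ω, Y t ω)) P)
    (hint : ∀ t, Integrable (Y t) P)
    -- in particular the conditional mean of `Y_t` given `F_{t−1}` is `X_t`
    (hcm : ∀ t : ℤ, P[Y t|condField X Y t] =ᵐ[P] X t) :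
    -- (i) `{d_t}` is a martingale difference sequence
    (∀ t : ℤ, P[fun ω => Y t ω - X t ω|condField X Y t] =ᵐ[P] 0) ∧
    -- (ii) the ARMA(1,1) recursion
    (∀ t : ℤ, ∀ ω, Y t ω - (α + β) * Y (t - 1) ω =
      δ + (Y t ω - X t ω) - α * (Y (t - 1) ω - X (t - 1) ω)) ∧
    -- (iii) the autocovariance function
    (Integrable (fun ω => (Y 0 ω) ^ 2) P →
      ∀ hlag : ℕ, 1 ≤ hlag →
        ∫ ω, (Y 0 ω - ∫ ω', Y 0 ω' ∂P) * (Y hlag ω - ∫ ω', Y 0 ω' ∂P) ∂P =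
          (α + β) ^ (hlag - 1) *
            ∫ ω, (Y 0 ω - ∫ ω', Y 0 ω' ∂P) * (Y 1 ω - ∫ ω', Y 0 ω' ∂P) ∂P) := by
  have hle := condField_le hXmeas hYmeas
  have hmds : ∀ t : ℤ, P[fun ω => Y t ω - X t ω|condField X Y t] =ᵐ[P] 0 := fun t =>
    condExp_sub_ae_eq_zero_of_condExp_ae_eq (hle t) (hint t) (hadapted t).stronglyMeasurable
      (hcm t)
  refine ⟨hmds, fun t ω => by rw [hrec t ω]; ring, fun hY₀sq n hn => ?_⟩
  set m := ∫ ω, Y 0 ω ∂P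
  have hYL2 : ∀ t, MemLp (Y t) 2 P := memLp_of_map_shift_eq hXmeas hYmeas hstat
    ((memLp_two_iff_integrable_sq (hYmeas 0).aestronglyMeasurable).mpr hY₀sq)
  have hXL2 : ∀ t, MemLp (X t) 2 P := fun t =>
    ((hYL2 t).condExp one_le_two).ae_eq (hcm t)
  have hZ : MemLp (fun ω => Y 0 ω - m) 2 P := (hYL2 0).sub (memLp_const m)
  have horth : ∀ t : ℤ, 1 ≤ t → ∫ ω, (Y 0 ω - m) * (Y t ω - X t ω) ∂P = 0 := fun t ht =>
    integral_mul_eq_zero_of_condExp_ae_eq_zero (hle t)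
      ((measurable_condField_of_lt (by omega)).sub_const m).stronglyMeasurable
      (hZ.integrable_mul ((hYL2 t).sub (hXL2 t))) ((hint t).sub ((hXL2 t).integrable one_le_two))
      (hmds t)
  refine pow_sub_one_mul_of_succ_eq_mul (c := fun k : ℕ => ∫ ω, (Y 0 ω - m) * (Y k ω - m) ∂P)
    (fun k hk => ?_) hn
  have hrec' := hrec (k + 1)
  simp only [add_sub_cancel_right] at hrec'
  push_cast
  exact integral_mul_sub_eq_of_recursion m hZ (hXL2 k) (hYL2 k) (hXL2 (k + 1)) (hYL2 (k + 1))
    hrec' (by simp [m, integral_sub (hint 0) (integrable_const m)]) (horth k (by omega))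
    (horth (k + 1) (by omega))

/-- in the stationary linear dynamic model, `d_t = Y_t − X_t` is a
martingale difference sequence, `Y_t` satisfies the causal ARMA(1,1) recursion
`Y_t − (α+β) Y_{t−1} = δ + d_t − α d_{t−1}`, and if `γ_Y(0) < ∞` then
`γ_Y(h) = (α+β)^{h−1} γ_Y(1)` for all `h ≥ 1`. -/
theorem stmt14 {Ω : Type*} [MeasurableSpace Ω] (P : Measure Ω) [IsProbabilityMeasure P]
    (μ : Measure ℝ) [SigmaFinite μ] (A hden B : ℝ → ℝ)
    (hB : StrictMono B) (hAB : ∀ η, HasDerivAt A (B η) η)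
    (δ α β : ℝ) (hδ : 0 < δ) (hα : 0 ≤ α) (hβ : 0 ≤ β) (hαβ : α + β < 1)
    (X Y : ℤ → Ω → ℝ)
    (hXmeas : ∀ t, Measurable (X t)) (hYmeas : ∀ t, Measurable (Y t))
    (hYnn : ∀ t ω, 0 ≤ Y t ω)
    -- the linear recursion
    (hrec : ∀ t : ℤ, ∀ ω, X t ω = δ + α * X (t - 1) ω + β * Y (t - 1) ω)
    -- `X_t` is measurable with respect to `F_{t−1}`
    (hadapted : ∀ t : ℤ, Measurable[condField X Y t] (X t))
    -- stationary regime
    (hstat : Measure.map (fun ω => fun t : ℤ => (X (t + 1) ω, Y (t + 1) ω)) P =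
      Measure.map (fun ω => fun t : ℤ => (X t ω, Y t ω)) P)
    (hint : ∀ t, Integrable (Y t) P)
    -- the conditional distribution of `Y_t` given `F_{t−1}` is the exponential family
    -- member with mean `X_t`
    (hcdist : ∀ t : ℤ, ∀ᵐ ω ∂P,
      condDistrib (Y t) (fun ω' => fun j : ℕ => (X (t - j) ω', Y (t - 1 - j) ω')) P
          ((fun j : ℕ => (X (t - j) ω, Y (t - 1 - j) ω))) =
        expFam μ A hden (Function.invFun B (X t ω)))
    -- in particular the conditional mean of `Y_t` given `F_{t−1}` is `X_t`
    (hcm : ∀ t : ℤ, P[Y t|condField X Y t] =ᵐ[P] X t) :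
    -- (i) `{d_t}` is a martingale difference sequence
    (∀ t : ℤ, P[fun ω => Y t ω - X t ω|condField X Y t] =ᵐ[P] 0) ∧
    -- (ii) the ARMA(1,1) recursion
    (∀ t : ℤ, ∀ ω, Y t ω - (α + β) * Y (t - 1) ω =
      δ + (Y t ω - X t ω) - α * (Y (t - 1) ω - X (t - 1) ω)) ∧
    -- (iii) the autocovariance function
    (Integrable (fun ω => (Y 0 ω) ^ 2) P →
      ∀ hlag : ℕ, 1 ≤ hlag →
        ∫ ω, (Y 0 ω - ∫ ω', Y 0 ω' ∂P) * (Y hlag ω - ∫ ω', Y 0 ω' ∂P) ∂P =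
          (α + β) ^ (hlag - 1) *
            ∫ ω, (Y 0 ω - ∫ ω', Y 0 ω' ∂P) * (Y 1 ω - ∫ ω', Y 0 ω' ∂P) ∂P) :=
  stmt14_general P δ α β X Y hXmeas hYmeas hrec hadapted hstat hint hcm
end
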